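/- arXiv:1111.2445 — 5 statements merged into one kernel-verified Lean document; each statement's English description precedes it below -/
import Mathlib

section
/- For a stationary Markov chain on a finite state space and any f : E → ℝ, the flow Φ_f(x,y) = f(x)c(x,y) − f(y)c(y,x) decomposes as Φ_f = Ψ_f + Υ_f where Ψ_f(x,y) = c_s(x,y)(f(x) − f(y)) and Υ_f(x,y) = c_a(x,y)(f(x)+f(y)), and consequently ‖Φ_f‖² = ‖Ψ_f‖² + ‖Υ_f‖² in the flow inner product. -/
open Finset

/-- **Pythagorean decomposition `Φ_f = Ψ_f + Υ_f`.**
For a stationary Markov chain on a finite state space with conductances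
`c x y = μ x * r x y`, symmetric part `c_s` and antisymmetric part `c_a`, the
flow `Φ_f x y = f x * c x y - f y * c y x` decomposes as `Φ_f = Ψ_f + Υ_f`
with `Ψ_f x y = c_s x y * (f x - f y)`, `Υ_f x y = c_a x y * (f x + f y)`,
and consequently `‖Φ_f‖² = ‖Ψ_f‖² + ‖Υ_f‖²` in the flow norm
`‖φ‖² = (1/2) ∑ φ x y ^ 2 / c_s x y`. -/
theorem phi_decomposition_pythagoras {E : Type*} [Fintype E]
    (r : E → E → ℝ) (μ : E → ℝ) (cs ca : E → E → ℝ)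
    (hr : ∀ x y, 0 ≤ r x y) (hrdiag : ∀ x, r x x = 0)
    (hμ : ∀ x, 0 < μ x)
    (hstat : ∀ y, ∑ x, μ x * r x y = μ y * ∑ x, r y x)
    (hcs : ∀ x y, cs x y = (μ x * r x y + μ y * r y x) / 2)
    (hca : ∀ x y, ca x y = (μ x * r x y - μ y * r y x) / 2)
    (f : E → ℝ) :
    (∀ x y, f x * (μ x * r x y) - f y * (μ y * r y x) =
        cs x y * (f x - f y) + ca x y * (f x + f y)) ∧
    (1 / 2) * ∑ x, ∑ y,
        (f x * (μ x * r x y) - f y * (μ y * r y x)) ^ 2 / cs x y =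
      (1 / 2) * (∑ x, ∑ y, (cs x y * (f x - f y)) ^ 2 / cs x y) +
      (1 / 2) * (∑ x, ∑ y, (ca x y * (f x + f y)) ^ 2 / cs x y) := by
  have key : ∀ x y, f x * (μ x * r x y) - f y * (μ y * r y x) =
      cs x y * (f x - f y) + ca x y * (f x + f y) := by
    intro x y; rw [hcs, hca]; ring
  refine ⟨key, ?_⟩
  -- termwise decomposition of the squared flow
  have term : ∀ x y,
      (f x * (μ x * r x y) - f y * (μ y * r y x)) ^ 2 / cs x y =
      (cs x y * (f x - f y)) ^ 2 / cs x y +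
      (ca x y * (f x + f y)) ^ 2 / cs x y +
      2 * ca x y * (f x ^ 2 - f y ^ 2) := by
    intro x y
    by_cases hc : cs x y = 0
    · have h0 : μ x * r x y + μ y * r y x = 0 := by
        have := hcs x y; rw [hc] at this; linarith
      have hp1 : 0 ≤ μ x * r x y := mul_nonneg (hμ x).le (hr x y)
      have hp2 : 0 ≤ μ y * r y x := mul_nonneg (hμ y).le (hr y x)
      have h1 : μ x * r x y = 0 := by linarith
      have h2 : μ y * r y x = 0 := by linarith
      have hca0 : ca x y = 0 := by rw [hca, h1, h2]; norm_num
      rw [h1, h2, hc, hca0]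
      simp
    · rw [key x y]
      field_simp
      ring
  -- row sums of ca vanish
  have row : ∀ x, ∑ y, ca x y = 0 := by
    intro x
    have h : ∑ y, (μ x * r x y - μ y * r y x) = 0 := by
      rw [Finset.sum_sub_distrib, hstat x, ← Finset.mul_sum, sub_self]
    simp_rw [hca]
    rw [← Finset.sum_div, h, zero_div]
  -- column sums of ca vanish
  have col : ∀ y, ∑ x, ca x y = 0 := by
    intro y
    have h : ∑ x, (μ x * r x y - μ y * r y x) = 0 := by
      rw [Finset.sum_sub_distrib, hstat y, ← Finset.mul_sum, sub_self]
    simp_rw [hca]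
    rw [← Finset.sum_div, h, zero_div]
  -- the cross term sums to zero
  have cross : ∑ x, ∑ y, 2 * ca x y * (f x ^ 2 - f y ^ 2) = 0 := by
    have expand : ∀ x y : E, 2 * ca x y * (f x ^ 2 - f y ^ 2) =
        2 * (f x ^ 2 * ca x y) - 2 * (f y ^ 2 * ca x y) := by
      intro x y; ring
    simp_rw [expand, Finset.sum_sub_distrib]
    have t1 : ∑ x : E, ∑ y : E, 2 * (f x ^ 2 * ca x y) = 0 := by
      refine Finset.sum_eq_zero fun x _ => ?_
      rw [← Finset.mul_sum, ← Finset.mul_sum, row x]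
      ring
    have t2 : ∑ x : E, ∑ y : E, 2 * (f y ^ 2 * ca x y) = 0 := by
      rw [Finset.sum_comm]
      refine Finset.sum_eq_zero fun y _ => ?_
      rw [← Finset.mul_sum, ← Finset.mul_sum, col y]
      ring
    rw [t1, t2, sub_self]
  simp_rw [term, Finset.sum_add_distrib]
  rw [cross]
  ring
end

section
/- For a finite irreducible Markov chain with generator L and stationary measure μ, the function V = S^{-1} L* f satisfies: Ψ_V is the orthogonal projection of Φ_f onto the space of gradient flows, and ⟨Ψ_V, Ψ_V⟩ = ⟨V, (−S)V⟩_μ = ⟨L*f, (−S)^{-1} L*f⟩_μ. -/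
open Finset

/-- The generator associated to jump rates `q`: `(L f)(x) = ∑ y, q x y * (f y - f x)`. -/
noncomputable def Ld {E : Type*} [Fintype E] (q : E → E → ℝ) (f : E → ℝ) (x : E) : ℝ :=
  ∑ y, q x y * (f y - f x)

/-- The adjoint jump rates: `r* x y = μ y * r y x / μ x`. -/
noncomputable def adjRates {E : Type*} (r : E → E → ℝ) (μ : E → ℝ) : E → E → ℝ :=
  fun x y => μ y * r y x / μ x

/-- The symmetric part of the generator: `S = (L + L*) / 2`. -/
noncomputable def symOp {E : Type*} [Fintype E] (r : E → E → ℝ) (μ : E → ℝ)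
    (f : E → ℝ) (x : E) : ℝ :=
  (Ld r f x + Ld (adjRates r μ) f x) / 2

/-!
Both `Φ_f` and `Ψ_V` are antisymmetric flows, and pairing an antisymmetric flow `φ` with a
gradient flow `Ψ_g` gives `∑ x, g x * div φ x` with `div φ x = ∑ y, φ x y`. Stationarity gives
`div Φ_f = -μ · L* f`, while `div Ψ_V = -μ · S V`, so `S V = L* f` says exactly that
`Φ_f - Ψ_V` is divergence free, hence orthogonal to all gradients. Pairing `Ψ_V` with itself
the same way gives the Dirichlet form `⟨V, (-S) V⟩_μ`. Where `cs x y = 0` both rates vanish by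
nonnegativity, so the division by `cs` (with `a / 0 = 0`) loses nothing.
-/

lemma mul_mul_div_of_eq_zero_imp {a b c : ℝ} (h : c = 0 → a = 0) : a * (c * b) / c = a * b := by
  rcases eq_or_ne c 0 with hc | hc
  · simp [hc, h hc]
  · field_simp

lemma sum_sum_mul_sub_of_antisymm {E : Type*} [Fintype E] (φ : E → E → ℝ)
    (hφ : ∀ x y, φ y x = -φ x y) (g : E → ℝ) :
    ∑ x, ∑ y, φ x y * (g x - g y) = 2 * ∑ x, g x * ∑ y, φ x y := by
  have hswap : ∑ x, ∑ y, φ x y * g y = -∑ x, ∑ y, φ x y * g x := by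
    rw [sum_comm, ← sum_neg_distrib]
    refine sum_congr rfl fun x _ => ?_
    rw [← sum_neg_distrib]
    exact sum_congr rfl fun y _ => by rw [hφ]; ring
  simp only [mul_sub, sum_sub_distrib, hswap, sub_neg_eq_add, ← two_mul, mul_sum]
  exact sum_congr rfl fun x _ => sum_congr rfl fun y _ => by ring

lemma rates_eq_zero_of_cs_eq_zero {E : Type*} {r : E → E → ℝ} {μ : E → ℝ} {cs : E → E → ℝ}
    (hr : ∀ x y, 0 ≤ r x y) (hμ : ∀ x, 0 < μ x)
    (hcs : ∀ x y, cs x y = (μ x * r x y + μ y * r y x) / 2) {x y : E} (h : cs x y = 0) :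
    μ x * r x y = 0 ∧ μ y * r y x = 0 := by
  have hxy : 0 ≤ μ x * r x y := mul_nonneg (hμ x).le (hr x y)
  have hyx : 0 ≤ μ y * r y x := mul_nonneg (hμ y).le (hr y x)
  rw [hcs] at h
  constructor <;> linarith

section Chain

variable {E : Type*} [Fintype E] {r : E → E → ℝ} {μ : E → ℝ} {cs : E → E → ℝ}

lemma mul_Ld_adjRates {x : E} (hμx : μ x ≠ 0) (W : E → ℝ) :
    μ x * Ld (adjRates r μ) W x = ∑ y, μ y * r y x * (W y - W x) := by
  rw [Ld, mul_sum]
  refine sum_congr rfl fun y _ => ?_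
  rw [adjRates, div_mul_eq_mul_div, mul_div_cancel₀ _ hμx]

lemma sum_cs_mul_sub {x : E} (hμx : μ x ≠ 0)
    (hcs : ∀ x y, cs x y = (μ x * r x y + μ y * r y x) / 2) (W : E → ℝ) :
    ∑ y, cs x y * (W x - W y) = -(μ x * symOp r μ W x) := by
  have hLd : μ x * Ld r W x = ∑ y, μ x * r x y * (W y - W x) := by
    rw [Ld, mul_sum]
    exact sum_congr rfl fun y _ => by ring
  rw [symOp, mul_div_assoc', mul_add, hLd, mul_Ld_adjRates hμx, ← sum_add_distrib,
    sum_div, ← sum_neg_distrib]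
  exact sum_congr rfl fun y _ => by rw [hcs]; ring

lemma sum_flux_sub {x : E} (hμx : μ x ≠ 0)
    (hstat : ∀ y, ∑ x, μ x * r x y = μ y * ∑ x, r y x) (f : E → ℝ) :
    ∑ y, (f x * (μ x * r x y) - f y * (μ y * r y x)) = -(μ x * Ld (adjRates r μ) f x) := by
  have hout : ∑ y, f x * (μ x * r x y) = ∑ y, μ y * r y x * f x := by
    rw [← mul_sum, ← mul_sum, ← hstat x, mul_sum]
    exact sum_congr rfl fun y _ => mul_comm _ _
  rw [sum_sub_distrib, hout, mul_Ld_adjRates hμx, ← sum_sub_distrib, ← sum_neg_distrib]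
  exact sum_congr rfl fun y _ => by ring

lemma sum_flux_sub_sub_eq_zero {x : E} (hμx : μ x ≠ 0)
    (hstat : ∀ y, ∑ x, μ x * r x y = μ y * ∑ x, r y x)
    (hcs : ∀ x y, cs x y = (μ x * r x y + μ y * r y x) / 2) {f V : E → ℝ}
    (hV : ∀ x, symOp r μ V x = Ld (adjRates r μ) f x) :
    ∑ y, (f x * (μ x * r x y) - f y * (μ y * r y x) - cs x y * (V x - V y)) = 0 := by
  rw [sum_sub_distrib, sum_flux_sub hμx hstat, sum_cs_mul_sub hμx hcs, hV, sub_self]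

end Chain

theorem projection_of_phi_on_gradient_flows_general {E : Type*} [Fintype E]
    (r : E → E → ℝ) (μ : E → ℝ) (cs : E → E → ℝ)
    (hr : ∀ x y, 0 ≤ r x y)
    (hμ : ∀ x, 0 < μ x)
    (hstat : ∀ y, ∑ x, μ x * r x y = μ y * ∑ x, r y x)
    (hcs : ∀ x y, cs x y = (μ x * r x y + μ y * r y x) / 2)
    (f V : E → ℝ)
    (hV : ∀ x, symOp r μ V x = Ld (adjRates r μ) f x) :
    (∀ g : E → ℝ,
      (1 / 2) * ∑ x, ∑ y,
        (f x * (μ x * r x y) - f y * (μ y * r y x) - cs x y * (V x - V y)) *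
          (cs x y * (g x - g y)) / cs x y = 0) ∧
    (1 / 2) * ∑ x, ∑ y, (cs x y * (V x - V y)) * (cs x y * (V x - V y)) / cs x y =
      ∑ x, μ x * V x * (-(symOp r μ V x)) ∧
    ∑ x, μ x * V x * (-(symOp r μ V x)) =
      ∑ x, μ x * Ld (adjRates r μ) f x * (-V x) := by
  have hcs_symm : ∀ x y, cs y x = cs x y := fun x y => by rw [hcs, hcs]; ring
  refine ⟨fun g => ?_, ?_, sum_congr rfl fun x _ => by rw [hV]; ring⟩
  · have hcancel : ∀ x y,
        (f x * (μ x * r x y) - f y * (μ y * r y x) - cs x y * (V x - V y)) *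
          (cs x y * (g x - g y)) / cs x y =
        (f x * (μ x * r x y) - f y * (μ y * r y x) - cs x y * (V x - V y)) * (g x - g y) :=
      fun x y => mul_mul_div_of_eq_zero_imp fun h => by
        obtain ⟨hxy, hyx⟩ := rates_eq_zero_of_cs_eq_zero hr hμ hcs h
        rw [h, hxy, hyx]; ring
    simp only [hcancel]
    rw [sum_sum_mul_sub_of_antisymm _ (fun x y => by rw [hcs_symm]; ring)]
    simp only [fun x => sum_flux_sub_sub_eq_zero (hμ x).ne' hstat hcs hV, mul_zero, sum_const_zero]
  · have hcancel : ∀ x y, cs x y * (V x - V y) * (cs x y * (V x - V y)) / cs x y =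
        cs x y * (V x - V y) * (V x - V y) :=
      fun x y => mul_mul_div_of_eq_zero_imp fun h => by rw [h, zero_mul]
    simp only [hcancel]
    rw [sum_sum_mul_sub_of_antisymm _ (fun x y => by rw [hcs_symm]; ring)]
    simp only [fun x => sum_cs_mul_sub (hμ x).ne' hcs V]
    rw [one_div, inv_mul_cancel_left₀ two_ne_zero]
    exact sum_congr rfl fun x _ => by ring

/-- **`Ψ_V` with `V = S⁻¹ L* f` is the projection of `Φ_f` on gradient flows.**
For a finite irreducible chain and `V` with `S V = L* f`:  the flow
`Φ_f - Ψ_V` is orthogonal to every gradient flow `Ψ_g`, and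
`⟨Ψ_V, Ψ_V⟩ = ⟨V, (-S) V⟩_μ = ⟨L* f, (-S)⁻¹ L* f⟩_μ` (the last scalar
product being `⟨L* f, -V⟩_μ`). -/
theorem projection_of_phi_on_gradient_flows {E : Type*} [Fintype E]
    (r : E → E → ℝ) (μ : E → ℝ) (cs : E → E → ℝ)
    (hr : ∀ x y, 0 ≤ r x y) (hrdiag : ∀ x, r x x = 0)
    (hμ : ∀ x, 0 < μ x)
    (hstat : ∀ y, ∑ x, μ x * r x y = μ y * ∑ x, r y x)
    (hirr : ∀ h : E → ℝ,
      (∀ x y, 0 < μ x * r x y + μ y * r y x → h x = h y) → ∀ x y, h x = h y)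
    (hcs : ∀ x y, cs x y = (μ x * r x y + μ y * r y x) / 2)
    (f V : E → ℝ)
    (hV : ∀ x, symOp r μ V x = Ld (adjRates r μ) f x) :
    (∀ g : E → ℝ,
      (1 / 2) * ∑ x, ∑ y,
        (f x * (μ x * r x y) - f y * (μ y * r y x) - cs x y * (V x - V y)) *
          (cs x y * (g x - g y)) / cs x y = 0) ∧
    (1 / 2) * ∑ x, ∑ y, (cs x y * (V x - V y)) * (cs x y * (V x - V y)) / cs x y =
      ∑ x, μ x * V x * (-(symOp r μ V x)) ∧
    ∑ x, μ x * V x * (-(symOp r μ V x)) =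
      ∑ x, μ x * Ld (adjRates r μ) f x * (-V x) :=
  projection_of_phi_on_gradient_flows_general r μ cs hr hμ hstat hcs f V hV
end

section
/- Dirichlet principle for non-reversible finite chains: for distinct states a ≠ b in a finite irreducible Markov chain, Cap({a},{b}) = inf over f : E → ℝ with f(a)=1, f(b)=0 of ⟨f, L(−S)^{-1}L* f⟩_μ, where Cap({a},{b}) = μ(a)λ(a) P_a[T_a⁺ > T_b⁺]. -/
open Finset

/-! The form `⟨g, -S h⟩_μ` is symmetric, and `⟨h, -S h⟩_μ = ⟨h, -L h⟩_μ` is a nonnegative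
Dirichlet form. If `S W = L* f` with `f a = 1`, `f b = 0`, then
`⟨W, -S V⟩_μ = -⟨f, L V⟩_μ = Cap`, since `L V` is supported on `{a, b}`; expanding
`0 ≤ ⟨W - V, -S (W - V)⟩_μ` gives `⟨W, -S W⟩_μ ≥ Cap`. Equality holds for `W = V` and
`f = (V + V*) / 2`, where `L* V* = L V`: such `V*` exists because `L*` maps onto the mean-zero
functions (its kernel is the constants, by irreducibility), and `⟨V*, -L V⟩_μ = ⟨V, -L V⟩_μ`
together with `Cap > 0` forces `V* a - V* b = 1`. -/

theorem LinearMap.range_eq_ker_of_finrank_ker_le_one {K V : Type*} [Field K] [AddCommGroup V]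
    [Module K V] [FiniteDimensional K V] {T : V →ₗ[K] V} {φ : Module.Dual K V} (hφ : φ ≠ 0)
    (hT : Module.finrank K (ker T) ≤ 1) (hTφ : range T ≤ ker φ) : range T = ker φ :=
  Submodule.eq_of_le_of_finrank_le hTφ <| by
    have := T.finrank_range_add_finrank_ker
    have := φ.finrank_ker_add_one_of_ne_zero hφ
    omega

section

variable {E : Type*} [Fintype E] {r : E → E → ℝ} {μ : E → ℝ}

section Generator

variable (q : E → E → ℝ)

theorem Ld_add (f g : E → ℝ) (x : E) : Ld q (f + g) x = Ld q f x + Ld q g x := by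
  simp only [Ld, Pi.add_apply, ← sum_add_distrib]
  exact sum_congr rfl fun _ _ => by ring

theorem Ld_smul (c : ℝ) (f : E → ℝ) (x : E) : Ld q (c • f) x = c * Ld q f x := by
  simp only [Ld, Pi.smul_apply, smul_eq_mul, mul_sum]
  exact sum_congr rfl fun _ _ => by ring

theorem Ld_sub (f g : E → ℝ) (x : E) : Ld q (f - g) x = Ld q f x - Ld q g x := by
  simp only [Ld, Pi.sub_apply, ← sum_sub_distrib]
  exact sum_congr rfl fun _ _ => by ring

theorem Ld_const (c : ℝ) (x : E) : Ld q (fun _ => c) x = 0 := by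
  simp [Ld]

noncomputable def Ld.linearMap : (E → ℝ) →ₗ[ℝ] E → ℝ where
  toFun := Ld q
  map_add' f g := funext <| Ld_add q f g
  map_smul' c f := funext <| Ld_smul q c f

end Generator

theorem sum_mul_Ld_eq_zero (hstat : ∀ y, ∑ x, μ x * r x y = μ y * ∑ x, r y x) (f : E → ℝ) :
    ∑ x, μ x * Ld r f x = 0 := by
  calc ∑ x, μ x * Ld r f x
      = ∑ y, (∑ x, μ x * r x y) * f y - ∑ x, μ x * (∑ y, r x y) * f x := by
        simp only [Ld, mul_sum, sum_mul]
        rw [sum_comm (f := fun y x => μ x * r x y * f y), ← sum_sub_distrib]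
        refine sum_congr rfl fun x _ => ?_
        rw [← sum_sub_distrib]
        exact sum_congr rfl fun y _ => by ring
    _ = 0 := by simp only [hstat, sub_self]

theorem sum_mul_mul_Ld (q : E → E → ℝ) (g f : E → ℝ) :
    ∑ x, μ x * g x * Ld q f x = ∑ x, ∑ y, μ x * q x y * (g x * (f y - f x)) := by
  refine sum_congr rfl fun x _ => ?_
  rw [Ld, mul_sum]
  exact sum_congr rfl fun y _ => by ring

/-- Summed against the stationary flow `μ x * r x y`, increments `h y - h x` vanish. -/
theorem sum_sum_eq_of_eq_add_flow_mul_sub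
    (hstat : ∀ y, ∑ x, μ x * r x y = μ y * ∑ x, r y x) {F G : E → E → ℝ} (h : E → ℝ)
    (hFG : ∀ x y, F x y = G x y + μ x * r x y * (h y - h x)) :
    ∑ x, ∑ y, F x y = ∑ x, ∑ y, G x y := by
  have hflow : ∑ x, ∑ y, μ x * r x y * (h y - h x) = 0 := by
    rw [← sum_mul_Ld_eq_zero hstat h]
    exact sum_congr rfl fun x _ => by rw [Ld, mul_sum]; simp only [mul_assoc]
  simp only [hFG, sum_add_distrib, hflow, add_zero]

theorem sum_mul_neg_Ld_self (hstat : ∀ y, ∑ x, μ x * r x y = μ y * ∑ x, r y x) (f : E → ℝ) :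
    ∑ x, μ x * f x * (-(Ld r f x)) = ∑ x, ∑ y, μ x * r x y * (f y - f x) ^ 2 / 2 := by
  have hneg : ∑ x, μ x * f x * (-(Ld r f x)) = ∑ x, μ x * (-f) x * Ld r f x :=
    sum_congr rfl fun x _ => by rw [Pi.neg_apply]; ring
  rw [hneg, sum_mul_mul_Ld]
  exact sum_sum_eq_of_eq_add_flow_mul_sub hstat (fun x => -f x ^ 2 / 2) fun x y => by
    rw [Pi.neg_apply]; ring

theorem sum_mul_neg_Ld_self_nonneg (hμ : ∀ x, 0 ≤ μ x) (hr : ∀ x y, 0 ≤ r x y)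
    (hstat : ∀ y, ∑ x, μ x * r x y = μ y * ∑ x, r y x) (f : E → ℝ) :
    0 ≤ ∑ x, μ x * f x * (-(Ld r f x)) := by
  rw [sum_mul_neg_Ld_self hstat]
  exact sum_nonneg fun x _ => sum_nonneg fun y _ => by have := hμ x; have := hr x y; positivity

theorem eq_of_sum_mul_neg_Ld_self_eq_zero (hμ : ∀ x, 0 ≤ μ x) (hr : ∀ x y, 0 ≤ r x y)
    (hstat : ∀ y, ∑ x, μ x * r x y = μ y * ∑ x, r y x)
    (hirr : ∀ h : E → ℝ,
      (∀ x y, 0 < μ x * r x y + μ y * r y x → h x = h y) → ∀ x y, h x = h y)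
    {f : E → ℝ} (hf : ∑ x, μ x * f x * (-(Ld r f x)) = 0) : ∀ x y, f x = f y := by
  rw [sum_mul_neg_Ld_self hstat] at hf
  have hterm : ∀ x y, 0 ≤ μ x * r x y * (f y - f x) ^ 2 / 2 := fun x y => by
    have := hμ x; have := hr x y; positivity
  have hzero : ∀ x y, μ x * r x y * (f y - f x) ^ 2 / 2 = 0 := fun x y =>
    (sum_eq_zero_iff_of_nonneg fun y _ => hterm x y).1
      ((sum_eq_zero_iff_of_nonneg fun x _ => sum_nonneg fun y _ => hterm x y).1 hf x
        (mem_univ x)) y (mem_univ y)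
  refine hirr f fun x y hxy => ?_
  have hsq : (μ x * r x y + μ y * r y x) * (f y - f x) ^ 2 = 0 := by
    linear_combination 2 * hzero x y + 2 * hzero y x
  have := pow_eq_zero_iff two_ne_zero |>.1 <| (mul_eq_zero.1 hsq).resolve_left hxy.ne'
  linarith

theorem sum_mul_Ld_adjRates (hμ : ∀ x, μ x ≠ 0)
    (hstat : ∀ y, ∑ x, μ x * r x y = μ y * ∑ x, r y x) (f g : E → ℝ) :
    ∑ x, μ x * g x * Ld (adjRates r μ) f x = ∑ x, μ x * f x * Ld r g x := by
  calc ∑ x, μ x * g x * Ld (adjRates r μ) f x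
      = ∑ x, ∑ y, μ y * r y x * (g x * (f y - f x)) := by
        rw [sum_mul_mul_Ld]
        refine sum_congr rfl fun x _ => sum_congr rfl fun y _ => ?_
        rw [adjRates]
        field_simp [hμ x]
    _ = ∑ x, ∑ y, μ x * r x y * (g y * (f x - f y)) := sum_comm
    _ = ∑ x, μ x * f x * Ld r g x := by
        rw [sum_mul_mul_Ld]
        exact sum_sum_eq_of_eq_add_flow_mul_sub hstat (fun x => -(f x * g x))
          fun x y => by ring

theorem sum_mul_Ld_adjRates_eq_zero (hμ : ∀ x, μ x ≠ 0)
    (hstat : ∀ y, ∑ x, μ x * r x y = μ y * ∑ x, r y x) (f : E → ℝ) :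
    ∑ x, μ x * Ld (adjRates r μ) f x = 0 := by
  simpa [Ld_const] using sum_mul_Ld_adjRates hμ hstat f fun _ => 1

theorem exists_Ld_adjRates_eq [Nonempty E] (hμ : ∀ x, 0 < μ x) (hr : ∀ x y, 0 ≤ r x y)
    (hstat : ∀ y, ∑ x, μ x * r x y = μ y * ∑ x, r y x)
    (hirr : ∀ h : E → ℝ,
      (∀ x y, 0 < μ x * r x y + μ y * r y x → h x = h y) → ∀ x y, h x = h y)
    {g : E → ℝ} (hg : ∑ x, μ x * g x = 0) : ∃ u : E → ℝ, ∀ x, Ld (adjRates r μ) u x = g x := by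
  let mean : Module.Dual ℝ (E → ℝ) := ∑ x, μ x • LinearMap.proj x
  have mean_apply (f : E → ℝ) : mean f = ∑ x, μ x * f x := by simp [mean]
  have hmean : mean ≠ 0 := fun h => by
    have := mean_apply 1
    simp only [h, LinearMap.zero_apply, Pi.one_apply, mul_one] at this
    exact (sum_pos (fun x _ => hμ x) univ_nonempty).ne' this.symm
  have hker : Module.finrank ℝ (LinearMap.ker (Ld.linearMap (adjRates r μ))) ≤ 1 := by
    refine (Submodule.finrank_mono (t := ℝ ∙ (1 : E → ℝ)) fun f hf => ?_).trans
      ((finrank_span_le_card _).trans (by simp))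
    have hconst : ∀ x y, f x = f y := by
      refine eq_of_sum_mul_neg_Ld_self_eq_zero (fun x => (hμ x).le) hr hstat hirr ?_
      simp only [mul_neg, sum_neg_distrib, neg_eq_zero]
      rw [← sum_mul_Ld_adjRates (fun x => (hμ x).ne') hstat]
      simp [show ∀ x, Ld (adjRates r μ) f x = 0 from congrFun hf]
    obtain ⟨x₀⟩ := ‹Nonempty E›
    exact Submodule.mem_span_singleton.2 ⟨f x₀, funext fun x => by simp [hconst x x₀]⟩
  have hrange : LinearMap.range (Ld.linearMap (adjRates r μ)) ≤ LinearMap.ker mean := by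
    rintro _ ⟨f, rfl⟩
    exact (mean_apply _).trans (sum_mul_Ld_adjRates_eq_zero (fun x => (hμ x).ne') hstat f)
  obtain ⟨u, hu⟩ : g ∈ LinearMap.range (Ld.linearMap (adjRates r μ)) := by
    rw [LinearMap.range_eq_ker_of_finrank_ker_le_one hmean hker hrange, LinearMap.mem_ker,
      mean_apply, hg]
  exact ⟨u, congrFun hu⟩

theorem sum_mul_neg_symOp (hμ : ∀ x, μ x ≠ 0)
    (hstat : ∀ y, ∑ x, μ x * r x y = μ y * ∑ x, r y x) (g h : E → ℝ) :
    ∑ x, μ x * g x * (-(symOp r μ h x))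
      = -(∑ x, μ x * g x * Ld r h x + ∑ x, μ x * h x * Ld r g x) / 2 := by
  rw [← sum_mul_Ld_adjRates hμ hstat h g, ← sum_add_distrib, ← sum_neg_distrib, sum_div]
  exact sum_congr rfl fun x _ => by rw [symOp]; ring

theorem sum_mul_neg_symOp_comm (hμ : ∀ x, μ x ≠ 0)
    (hstat : ∀ y, ∑ x, μ x * r x y = μ y * ∑ x, r y x) (g h : E → ℝ) :
    ∑ x, μ x * g x * (-(symOp r μ h x)) = ∑ x, μ x * h x * (-(symOp r μ g x)) := by
  rw [sum_mul_neg_symOp hμ hstat, sum_mul_neg_symOp hμ hstat, add_comm]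

theorem sum_mul_neg_symOp_self (hμ : ∀ x, μ x ≠ 0)
    (hstat : ∀ y, ∑ x, μ x * r x y = μ y * ∑ x, r y x) (f : E → ℝ) :
    ∑ x, μ x * f x * (-(symOp r μ f x)) = ∑ x, μ x * f x * (-(Ld r f x)) := by
  rw [sum_mul_neg_symOp hμ hstat]
  simp only [mul_neg, sum_neg_distrib]
  ring

theorem two_mul_sum_mul_neg_symOp_le (hμ : ∀ x, 0 < μ x) (hr : ∀ x y, 0 ≤ r x y)
    (hstat : ∀ y, ∑ x, μ x * r x y = μ y * ∑ x, r y x) (g h : E → ℝ) :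
    2 * ∑ x, μ x * g x * (-(symOp r μ h x))
      ≤ ∑ x, μ x * g x * (-(symOp r μ g x)) + ∑ x, μ x * h x * (-(symOp r μ h x)) := by
  have hμ₀ : ∀ x, μ x ≠ 0 := fun x => (hμ x).ne'
  have hnonneg := sum_mul_neg_Ld_self_nonneg (fun x => (hμ x).le) hr hstat (g - h)
  rw [← sum_mul_neg_symOp_self hμ₀ hstat] at hnonneg
  have hexpand : ∑ x, μ x * (g - h) x * (-(symOp r μ (g - h) x))
      = ∑ x, μ x * g x * (-(symOp r μ g x)) - ∑ x, μ x * g x * (-(symOp r μ h x))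
        - (∑ x, μ x * h x * (-(symOp r μ g x)) - ∑ x, μ x * h x * (-(symOp r μ h x))) := by
    simp only [← sum_sub_distrib]
    exact sum_congr rfl fun x _ => by simp only [symOp, Ld_sub, Pi.sub_apply]; ring
  rw [hexpand, sum_mul_neg_symOp_comm hμ₀ hstat h g] at hnonneg
  linarith

/-- `L V` has mean zero and is supported on `{a, b}`. -/
theorem sum_mul_neg_Ld_of_harmonic {a b : E} {V : E → ℝ} (hab : a ≠ b)
    (hstat : ∀ y, ∑ x, μ x * r x y = μ y * ∑ x, r y x) (hVa : V a = 1) (hVb : V b = 0)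
    (hVharm : ∀ x, x ≠ a → x ≠ b → Ld r V x = 0) (f : E → ℝ) :
    ∑ x, μ x * f x * (-(Ld r V x)) = (f a - f b) * ∑ x, μ x * V x * (-(Ld r V x)) := by
  have hsupp : ∀ g : E → ℝ, ∑ x, μ x * g x * (-(Ld r V x))
      = μ a * g a * (-(Ld r V a)) + μ b * g b * (-(Ld r V b)) := fun g =>
    Fintype.sum_eq_add a b hab fun x hx => by rw [hVharm x hx.1 hx.2]; ring
  have hmean : μ a * Ld r V a + μ b * Ld r V b = 0 := by
    have := hsupp 1
    simp only [Pi.one_apply, mul_one, mul_neg, sum_neg_distrib, sum_mul_Ld_eq_zero hstat] at this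
    linarith
  rw [hsupp, hsupp, hVa, hVb]
  linear_combination -f b * hmean

end

theorem dirichlet_principle_nonreversible_general {E : Type*} [Fintype E]
    (r : E → E → ℝ) (μ : E → ℝ) (a b : E) (hab : a ≠ b)
    (hr : ∀ x y, 0 ≤ r x y)
    (hμ : ∀ x, 0 < μ x)
    (hstat : ∀ y, ∑ x, μ x * r x y = μ y * ∑ x, r y x)
    (hirr : ∀ h : E → ℝ,
      (∀ x y, 0 < μ x * r x y + μ y * r y x → h x = h y) → ∀ x y, h x = h y)
    (V : E → ℝ) (hVa : V a = 1) (hVb : V b = 0)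
    (hVharm : ∀ x, x ≠ a → x ≠ b → Ld r V x = 0) :
    IsLeast
      { v : ℝ | ∃ f W : E → ℝ, f a = 1 ∧ f b = 0 ∧
          (∀ x, symOp r μ W x = Ld (adjRates r μ) f x) ∧
          v = ∑ x, μ x * W x * (-(symOp r μ W x)) }
      (∑ x, μ x * V x * (-(Ld r V x))) := by
  have hμ₀ : ∀ x, μ x ≠ 0 := fun x => (hμ x).ne'
  set cap := ∑ x, μ x * V x * (-(Ld r V x))
  have hharm : ∀ f : E → ℝ, ∑ x, μ x * f x * (-(Ld r V x)) = (f a - f b) * cap :=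
    sum_mul_neg_Ld_of_harmonic hab hstat hVa hVb hVharm
  refine ⟨?_, ?_⟩
  · -- `f = (V + V*) / 2` with `V* = u - u b` solving `L* V* = L V`, so that `L* f = S V`.
    have : Nonempty E := ⟨a⟩
    obtain ⟨u, hu⟩ := exists_Ld_adjRates_eq hμ hr hstat hirr (sum_mul_Ld_eq_zero hstat V)
    have hcap : 0 < cap := by
      refine (sum_mul_neg_Ld_self_nonneg (fun x => (hμ x).le) hr hstat V).lt_of_ne fun h => ?_
      have := eq_of_sum_mul_neg_Ld_self_eq_zero (fun x => (hμ x).le) hr hstat hirr h.symm a b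
      simp [hVa, hVb] at this
    have hu_ab : u a - u b = 1 := by
      refine mul_right_cancel₀ hcap.ne' ?_
      rw [one_mul, ← hharm u]
      simp only [cap, mul_neg, sum_neg_distrib, neg_inj]
      rw [← sum_mul_Ld_adjRates hμ₀ hstat u V]
      simp only [hu]
    refine ⟨(2 : ℝ)⁻¹ • (V + (u - fun _ => u b)), V, ?_, ?_, fun x => ?_,
      (sum_mul_neg_symOp_self hμ₀ hstat V).symm⟩
    · norm_num [hVa, hu_ab]
    · simp [hVb]
    · rw [symOp, Ld_smul, Ld_add, Ld_sub, Ld_const, hu]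
      ring
  · rintro v ⟨f, W, hfa, hfb, hSW, rfl⟩
    have hWV : ∑ x, μ x * W x * (-(symOp r μ V x)) = cap := calc
      _ = ∑ x, μ x * V x * (-(symOp r μ W x)) := sum_mul_neg_symOp_comm hμ₀ hstat W V
      _ = -∑ x, μ x * V x * Ld (adjRates r μ) f x := by simp only [hSW, mul_neg, sum_neg_distrib]
      _ = ∑ x, μ x * f x * (-(Ld r V x)) := by
        rw [sum_mul_Ld_adjRates hμ₀ hstat]; simp only [mul_neg, sum_neg_distrib]
      _ = cap := by rw [hharm f, hfa, hfb, sub_zero, one_mul]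
    linarith [two_mul_sum_mul_neg_symOp_le hμ hr hstat W V, sum_mul_neg_symOp_self hμ₀ hstat V]

/-- **Dirichlet principle for non-reversible finite chains.**
For distinct states `a ≠ b` of a finite irreducible Markov chain, the
capacity `Cap({a},{b}) = ⟨V_{a,b}, (-L) V_{a,b}⟩_μ` (where `V_{a,b}` is the
`L`-harmonic function on `E ∖ {a,b}` with `V a = 1`, `V b = 0`) is the
minimum over `f` with `f a = 1`, `f b = 0` of `⟨f, L (-S)⁻¹ L* f⟩_μ`; the
latter quadratic form is encoded by a solution `W` of `S W = L* f`, giving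
`⟨f, L (-S)⁻¹ L* f⟩_μ = ⟨W, (-S) W⟩_μ`. -/
theorem dirichlet_principle_nonreversible {E : Type*} [Fintype E]
    (r : E → E → ℝ) (μ : E → ℝ) (a b : E) (hab : a ≠ b)
    (hr : ∀ x y, 0 ≤ r x y) (hrdiag : ∀ x, r x x = 0)
    (hμ : ∀ x, 0 < μ x)
    (hstat : ∀ y, ∑ x, μ x * r x y = μ y * ∑ x, r y x)
    (hirr : ∀ h : E → ℝ,
      (∀ x y, 0 < μ x * r x y + μ y * r y x → h x = h y) → ∀ x y, h x = h y)
    (hSsurj : ∀ g : E → ℝ, (∑ x, μ x * g x = 0) →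
      ∃ W : E → ℝ, ∀ x, symOp r μ W x = g x)
    (V : E → ℝ) (hVa : V a = 1) (hVb : V b = 0)
    (hVharm : ∀ x, x ≠ a → x ≠ b → Ld r V x = 0) :
    IsLeast
      { v : ℝ | ∃ f W : E → ℝ, f a = 1 ∧ f b = 0 ∧
          (∀ x, symOp r μ W x = Ld (adjRates r μ) f x) ∧
          v = ∑ x, μ x * W x * (-(symOp r μ W x)) }
      (∑ x, μ x * V x * (-(Ld r V x))) :=
  dirichlet_principle_nonreversible_general r μ a b hab hr hμ hstat hirr V hVa hVb hVharm
end

section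
/- The unique minimizer of f ↦ ⟨f, L(−S)^{-1}L*f⟩_μ over functions with f(a)=1, f(b)=0 on a finite irreducible chain is f_{a,b} = (1/2)(V_{a,b} + V*_{a,b}), where V_{a,b} is L-harmonic and V*_{a,b} is L*-harmonic on E ∖ {a,b} with boundary values 1 at a and 0 at b. -/
open Finset

section Aux

variable {E : Type*} [Fintype E]

lemma Ld_sub_s15 (q : E → E → ℝ) (u v : E → ℝ) (x : E) :
    Ld q (fun z => u z - v z) x = Ld q u x - Ld q v x := by
  unfold Ld
  rw [← Finset.sum_sub_distrib]
  exact Finset.sum_congr rfl fun y _ => by ring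

lemma Ld_avg (q : E → E → ℝ) (u v : E → ℝ) (x : E) :
    Ld q (fun z => (u z + v z) / 2) x = (Ld q u x + Ld q v x) / 2 := by
  unfold Ld
  rw [← Finset.sum_add_distrib, Finset.sum_div]
  exact Finset.sum_congr rfl fun y _ => by ring

lemma Ld_of_const (q : E → E → ℝ) (u : E → ℝ) (hu : ∀ x y, u x = u y) (x : E) :
    Ld q u x = 0 :=
  Finset.sum_eq_zero fun y _ => by rw [hu y x]; ring

lemma symOp_sub (r : E → E → ℝ) (μ : E → ℝ) (u v : E → ℝ) (x : E) :
    symOp r μ (fun z => u z - v z) x = symOp r μ u x - symOp r μ v x := by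
  unfold symOp; rw [Ld_sub_s15, Ld_sub_s15]; ring

variable (r : E → E → ℝ) (μ : E → ℝ)

lemma mu_adjRates (hμ : ∀ x, 0 < μ x) (x y : E) :
    μ x * adjRates r μ x y = μ y * r y x := by
  have hx : μ x ≠ 0 := (hμ x).ne'
  unfold adjRates
  field_simp

lemma hstat_sum (hstat : ∀ y, ∑ x, μ x * r x y = μ y * ∑ x, r y x) (w : E → ℝ) :
    ∑ x, ∑ y, μ x * r x y * w y = ∑ x, ∑ y, μ x * r x y * w x := by
  rw [Finset.sum_comm]
  refine Finset.sum_congr rfl fun y _ => ?_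
  rw [← Finset.sum_mul, hstat y, Finset.mul_sum, Finset.sum_mul]

lemma adj (hμ : ∀ x, 0 < μ x) (hstat : ∀ y, ∑ x, μ x * r x y = μ y * ∑ x, r y x)
    (u v : E → ℝ) :
    ∑ x, μ x * Ld r u x * v x = ∑ x, μ x * u x * Ld (adjRates r μ) v x := by
  have h1 : ∀ x, μ x * Ld r u x * v x
      = ∑ y, (μ x * r x y * (u y * v x) - μ x * r x y * (u x * v x)) := by
    intro x; unfold Ld
    rw [Finset.mul_sum, Finset.sum_mul]
    exact Finset.sum_congr rfl fun y _ => by ring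
  have h2 : ∀ x, μ x * u x * Ld (adjRates r μ) v x
      = ∑ y, (μ y * r y x * (u x * v y) - μ y * r y x * (u x * v x)) := by
    intro x; unfold Ld
    rw [Finset.mul_sum]
    refine Finset.sum_congr rfl fun y _ => ?_
    calc μ x * u x * (adjRates r μ x y * (v y - v x))
        = (μ x * adjRates r μ x y) * (u x * (v y - v x)) := by ring
      _ = (μ y * r y x) * (u x * (v y - v x)) := by rw [mu_adjRates r μ hμ]
      _ = μ y * r y x * (u x * v y) - μ y * r y x * (u x * v x) := by ring
  simp only [h1, h2]
  simp only [Finset.sum_sub_distrib]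
  have e1 : ∑ x, ∑ y, μ y * r y x * (u x * v y)
      = ∑ x, ∑ y, μ x * r x y * (u y * v x) := Finset.sum_comm
  have e2 : ∑ x, ∑ y, μ y * r y x * (u x * v x)
      = ∑ x, ∑ y, μ x * r x y * (u y * v y) := Finset.sum_comm
  have e3 := hstat_sum r μ hstat (fun z => u z * v z)
  rw [e1, e2, ← e3]

lemma sum_Ld (hμ : ∀ x, 0 < μ x) (hstat : ∀ y, ∑ x, μ x * r x y = μ y * ∑ x, r y x)
    (u : E → ℝ) : ∑ x, μ x * Ld r u x = 0 := by
  have h := adj r μ hμ hstat u (fun _ => (1 : ℝ))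
  have hc : ∀ x, Ld (adjRates r μ) (fun _ => (1 : ℝ)) x = 0 :=
    fun x => Ld_of_const _ (fun _ => (1:ℝ)) (fun _ _ => rfl) x
  simp only [hc, mul_one, mul_zero, Finset.sum_const_zero] at h
  exact h

lemma sum_Ld_adj (hμ : ∀ x, 0 < μ x) (hstat : ∀ y, ∑ x, μ x * r x y = μ y * ∑ x, r y x)
    (u : E → ℝ) : ∑ x, μ x * Ld (adjRates r μ) u x = 0 := by
  have h := adj r μ hμ hstat (fun _ => (1 : ℝ)) u
  have hc : ∀ x, Ld r (fun _ => (1 : ℝ)) x = 0 :=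
    fun x => Ld_of_const _ (fun _ => (1:ℝ)) (fun _ _ => rfl) x
  simp only [hc, mul_one, mul_zero, zero_mul, Finset.sum_const_zero] at h
  exact h.symm

lemma symOp_inner (u q : E → ℝ) :
    ∑ x, μ x * u x * symOp r μ q x
      = (1/2) * (∑ x, μ x * u x * Ld r q x) + (1/2) * (∑ x, μ x * u x * Ld (adjRates r μ) q x) := by
  rw [Finset.mul_sum, Finset.mul_sum, ← Finset.sum_add_distrib]
  refine Finset.sum_congr rfl fun x _ => ?_
  unfold symOp; ring

lemma symOp_symm (hμ : ∀ x, 0 < μ x) (hstat : ∀ y, ∑ x, μ x * r x y = μ y * ∑ x, r y x)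
    (u v : E → ℝ) :
    ∑ x, μ x * u x * symOp r μ v x = ∑ x, μ x * v x * symOp r μ u x := by
  rw [symOp_inner, symOp_inner]
  have h2 : ∑ x, μ x * u x * Ld (adjRates r μ) v x = ∑ x, μ x * v x * Ld r u x := by
    rw [← adj r μ hμ hstat u v]
    exact Finset.sum_congr rfl fun x _ => by ring
  have h3 : ∑ x, μ x * u x * Ld r v x = ∑ x, μ x * v x * Ld (adjRates r μ) u x := by
    rw [← adj r μ hμ hstat v u]
    exact Finset.sum_congr rfl fun x _ => by ring
  rw [h2, h3]; ring

lemma dirichlet_form (hμ : ∀ x, 0 < μ x)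
    (hstat : ∀ y, ∑ x, μ x * r x y = μ y * ∑ x, r y x) (u : E → ℝ) :
    ∑ x, μ x * u x * (-(symOp r μ u x))
      = (1/2) * ∑ x, ∑ y, μ x * r x y * (u x - u y)^2 := by
  have hN : ∑ x, μ x * u x * (-(symOp r μ u x)) = -(∑ x, μ x * u x * symOp r μ u x) := by
    rw [← Finset.sum_neg_distrib]
    exact Finset.sum_congr rfl fun x _ => by ring
  have hB : ∑ x, μ x * u x * Ld (adjRates r μ) u x = ∑ x, μ x * u x * Ld r u x := by
    rw [← adj r μ hμ hstat u u]
    exact Finset.sum_congr rfl fun x _ => by ring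
  rw [hN, symOp_inner, hB]
  have hA2 : ∑ x, μ x * u x * Ld r u x
      = ∑ x, ∑ y, (μ x * r x y * (u x * u y) - μ x * r x y * (u x * u x)) := by
    refine Finset.sum_congr rfl fun x _ => ?_
    unfold Ld
    rw [Finset.mul_sum]
    exact Finset.sum_congr rfl fun y _ => by ring
  rw [hA2]
  have hw := hstat_sum r μ hstat (fun z => (1/2) * (u z * u z))
  have expand : ∀ x y : E, (1/2) * (μ x * r x y * (u x - u y)^2)
      = -(μ x * r x y * (u x * u y) - μ x * r x y * (u x * u x))
        + (μ x * r x y * ((1/2) * (u y * u y)) - μ x * r x y * ((1/2) * (u x * u x))) := by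
    intro x y; ring
  have hR : (1/2) * (∑ x, ∑ y, μ x * r x y * (u x - u y)^2)
      = ∑ x, ∑ y, ((1/2) * (μ x * r x y * (u x - u y)^2)) := by
    rw [Finset.mul_sum]
    exact Finset.sum_congr rfl fun x _ => Finset.mul_sum _ _ _
  rw [hR]
  simp only [expand]
  simp only [Finset.sum_add_distrib, Finset.sum_sub_distrib, Finset.sum_neg_distrib]
  rw [hw]
  ring

lemma dform_nonneg (hr : ∀ x y, 0 ≤ r x y) (hμ : ∀ x, 0 < μ x) (u : E → ℝ) :
    0 ≤ ∑ x : E, ∑ y : E, μ x * r x y * (u x - u y)^2 := by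
  refine Finset.sum_nonneg fun x _ => Finset.sum_nonneg fun y _ => ?_
  have := hμ x
  have := hr x y
  positivity

lemma const_of_dform_zero (hr : ∀ x y, 0 ≤ r x y) (hμ : ∀ x, 0 < μ x)
    (hirr : ∀ h : E → ℝ,
      (∀ x y, 0 < μ x * r x y + μ y * r y x → h x = h y) → ∀ x y, h x = h y)
    (u : E → ℝ) (h0 : ∑ x : E, ∑ y : E, μ x * r x y * (u x - u y)^2 = 0) :
    ∀ x y, u x = u y := by
  have hz : ∀ x y : E, μ x * r x y * (u x - u y)^2 = 0 := by
    have hinner : ∀ x ∈ Finset.univ (α := E), ∑ y : E, μ x * r x y * (u x - u y)^2 = 0 := by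
      rw [← Finset.sum_eq_zero_iff_of_nonneg]
      · exact h0
      · intro x _
        refine Finset.sum_nonneg fun y _ => ?_
        have := hμ x; have := hr x y; positivity
    intro x y
    have := hinner x (Finset.mem_univ x)
    have h2 := (Finset.sum_eq_zero_iff_of_nonneg (fun y _ => by
      have := hμ x; have := hr x y; positivity)).mp this
    exact h2 y (Finset.mem_univ y)
  refine hirr u fun x y hxy => ?_
  by_cases hc : 0 < r x y
  · have hpos : 0 < μ x * r x y := mul_pos (hμ x) hc
    have hsq : (u x - u y)^2 = 0 := by
      rcases mul_eq_zero.mp (hz x y) with h | h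
      · exact absurd h hpos.ne'
      · exact h
    have := pow_eq_zero_iff (n := 2) (by norm_num) |>.mp hsq
    linarith [sub_eq_zero.mp this]
  · have hry : 0 < r y x := by
      have h1 : r x y = 0 := le_antisymm (not_lt.mp hc) (hr x y)
      rcases (mul_pos_iff.mp (by nlinarith [hμ x, hμ y] : 0 < μ y * r y x)) with ⟨_, h⟩ | ⟨h, _⟩
      · exact h
      · exact absurd h (not_lt.mpr (le_of_lt (hμ y)))
    have hpos : 0 < μ y * r y x := mul_pos (hμ y) hry
    have hsq : (u y - u x)^2 = 0 := by
      rcases mul_eq_zero.mp (hz y x) with h | h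
      · exact absurd h hpos.ne'
      · exact h
    have := pow_eq_zero_iff (n := 2) (by norm_num) |>.mp hsq
    linarith [sub_eq_zero.mp this]

lemma sum_eq_ab (a b : E) (hab : a ≠ b) (t : E → ℝ)
    (ht : ∀ x, x ≠ a → x ≠ b → t x = 0) : ∑ x, t x = t a + t b := by
  classical
  rw [← Finset.sum_pair hab]
  refine (Finset.sum_subset (Finset.subset_univ _) fun x _ hx => ?_).symm
  simp only [Finset.mem_insert, Finset.mem_singleton] at hx
  push_neg at hx
  exact ht x hx.1 hx.2

end Aux

/-- **The unique minimizer of the Dirichlet principle is `(V_{a,b} + V*_{a,b})/2`.**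
For a finite irreducible chain, the unique minimizer of
`f ↦ ⟨f, L (-S)⁻¹ L* f⟩_μ` over functions with `f a = 1`, `f b = 0` is
`f₀ = (V_{a,b} + V*_{a,b}) / 2`, where `V_{a,b}` is `L`-harmonic and
`V*_{a,b}` is `L*`-harmonic on `E ∖ {a,b}` with boundary values `1` at `a`
and `0` at `b`.  The quadratic form is encoded by solutions `W` of
`S W = L* f`, via `⟨f, L (-S)⁻¹ L* f⟩_μ = ⟨W, (-S) W⟩_μ`. -/
theorem unique_minimizer_dirichlet_principle {E : Type*} [Fintype E]
    (r : E → E → ℝ) (μ : E → ℝ) (a b : E) (hab : a ≠ b)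
    (hr : ∀ x y, 0 ≤ r x y) (hrdiag : ∀ x, r x x = 0)
    (hμ : ∀ x, 0 < μ x)
    (hstat : ∀ y, ∑ x, μ x * r x y = μ y * ∑ x, r y x)
    (hirr : ∀ h : E → ℝ,
      (∀ x y, 0 < μ x * r x y + μ y * r y x → h x = h y) → ∀ x y, h x = h y)
    (V Vs : E → ℝ)
    (hVa : V a = 1) (hVb : V b = 0)
    (hVharm : ∀ x, x ≠ a → x ≠ b → Ld r V x = 0)
    (hVsa : Vs a = 1) (hVsb : Vs b = 0)
    (hVsharm : ∀ x, x ≠ a → x ≠ b → Ld (adjRates r μ) Vs x = 0) :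
    ∀ f W W₀ : E → ℝ, f a = 1 → f b = 0 →
      (∀ x, symOp r μ W x = Ld (adjRates r μ) f x) →
      (∀ x, symOp r μ W₀ x =
        Ld (adjRates r μ) (fun z => (V z + Vs z) / 2) x) →
      (∑ x, μ x * W₀ x * (-(symOp r μ W₀ x)) ≤
        ∑ x, μ x * W x * (-(symOp r μ W x))) ∧
      (∑ x, μ x * W x * (-(symOp r μ W x)) =
          ∑ x, μ x * W₀ x * (-(symOp r μ W₀ x)) →
        f = fun z => (V z + Vs z) / 2) := by
  intro f W W₀ hfa hfb hW hW₀
  classical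
  -- boundary identity: L V = L* Vs at a and b
  have hadjV : ∑ x, μ x * Ld r V x * Vs x = ∑ x, μ x * V x * Ld (adjRates r μ) Vs x :=
    adj r μ hμ hstat V Vs
  have hLab : ∑ x, μ x * Ld r V x * Vs x = μ a * Ld r V a := by
    rw [sum_eq_ab a b hab _ (fun x hxa hxb => by rw [hVharm x hxa hxb]; ring)]
    rw [hVsa, hVsb]; ring
  have hRab : ∑ x, μ x * V x * Ld (adjRates r μ) Vs x = μ a * Ld (adjRates r μ) Vs a := by
    rw [sum_eq_ab a b hab _ (fun x hxa hxb => by rw [hVsharm x hxa hxb]; ring)]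
    rw [hVa, hVb]; ring
  have hKa : Ld r V a = Ld (adjRates r μ) Vs a := by
    have h := hadjV
    rw [hLab, hRab] at h
    exact mul_left_cancel₀ (hμ a).ne' h
  have hmV : μ a * Ld r V a + μ b * Ld r V b = 0 := by
    have h := sum_Ld r μ hμ hstat V
    rwa [sum_eq_ab a b hab _ (fun x hxa hxb => by rw [hVharm x hxa hxb]; ring)] at h
  have hmVs : μ a * Ld (adjRates r μ) Vs a + μ b * Ld (adjRates r μ) Vs b = 0 := by
    have h := sum_Ld_adj r μ hμ hstat Vs
    rwa [sum_eq_ab a b hab _ (fun x hxa hxb => by rw [hVsharm x hxa hxb]; ring)] at h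
  have hKb : Ld r V b = Ld (adjRates r μ) Vs b := by
    rw [hKa] at hmV
    have h1 : μ b * Ld r V b = μ b * Ld (adjRates r μ) Vs b := by linarith
    exact mul_left_cancel₀ (hμ b).ne' h1
  -- W₀ - V is S-harmonic everywhere, hence constant
  have hSh : ∀ x, symOp r μ (fun z => W₀ z - V z) x = 0 := by
    intro x
    rw [symOp_sub, hW₀ x, Ld_avg]
    unfold symOp
    by_cases hxa : x = a
    · subst hxa; rw [hKa]; ring
    · by_cases hxb : x = b
      · subst hxb; rw [hKb]; ring
      · rw [hVharm x hxa hxb, hVsharm x hxa hxb]; ring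
  have hconstW₀V : ∀ x y, W₀ x - V x = W₀ y - V y := by
    have hz : ∑ x, μ x * (W₀ x - V x) * (-(symOp r μ (fun z => W₀ z - V z) x)) = 0 :=
      Finset.sum_eq_zero fun x _ => by rw [hSh x]; ring
    have hd : ∑ x, μ x * (W₀ x - V x) * (-(symOp r μ (fun z => W₀ z - V z) x))
        = (1/2) * ∑ x, ∑ y, μ x * r x y * ((W₀ x - V x) - (W₀ y - V y))^2 :=
      dirichlet_form r μ hμ hstat _
    have hD0 : ∑ x, ∑ y, μ x * r x y * ((W₀ x - V x) - (W₀ y - V y))^2 = 0 := by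
      rw [hz] at hd; linarith
    exact const_of_dform_zero r μ hr hμ hirr _ hD0
  have hW₀harm : ∀ x, x ≠ a → x ≠ b → Ld r W₀ x = 0 := by
    intro x hxa hxb
    have h1 : Ld r (fun z => W₀ z - V z) x = 0 := Ld_of_const _ _ hconstW₀V x
    rw [Ld_sub_s15] at h1
    have h2 := hVharm x hxa hxb
    linarith
  -- g := f - f₀ vanishes at a, b
  have hga : f a - (V a + Vs a)/2 = 0 := by rw [hfa, hVa, hVsa]; norm_num
  have hgb : f b - (V b + Vs b)/2 = 0 := by rw [hfb, hVb, hVsb]; norm_num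
  -- U := W - W₀ solves S U = L* g
  have hSU : ∀ x, symOp r μ (fun z => W z - W₀ z) x
      = Ld (adjRates r μ) (fun z => f z - (V z + Vs z)/2) x := by
    intro x
    have h := Ld_sub_s15 (adjRates r μ) f (fun z => (V z + Vs z)/2) x
    rw [symOp_sub, hW x, hW₀ x]
    exact h.symm
  -- cross term vanishes
  have hcross : ∑ x, μ x * W₀ x * symOp r μ (fun z => W z - W₀ z) x = 0 := by
    have h1 : ∑ x, μ x * W₀ x * symOp r μ (fun z => W z - W₀ z) x
        = ∑ x, μ x * W₀ x * Ld (adjRates r μ) (fun z => f z - (V z + Vs z)/2) x :=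
      Finset.sum_congr rfl fun x _ => by rw [hSU x]
    rw [h1, ← adj r μ hμ hstat W₀ (fun z => f z - (V z + Vs z)/2)]
    refine Finset.sum_eq_zero fun x _ => ?_
    show μ x * Ld r W₀ x * (f x - (V x + Vs x)/2) = 0
    by_cases hxa : x = a
    · subst hxa; rw [hga]; ring
    · by_cases hxb : x = b
      · subst hxb; rw [hgb]; ring
      · rw [hW₀harm x hxa hxb]; ring
  -- expansion D(W) = D(W₀) + D(U) - cross - cross'
  have hpt : ∀ x, μ x * W x * (-(symOp r μ W x))
      = μ x * W₀ x * (-(symOp r μ W₀ x))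
        + μ x * (W x - W₀ x) * (-(symOp r μ (fun z => W z - W₀ z) x))
        - μ x * W₀ x * symOp r μ (fun z => W z - W₀ z) x
        - μ x * (W x - W₀ x) * symOp r μ W₀ x := by
    intro x
    have e2 : symOp r μ (fun z => W z - W₀ z) x = symOp r μ W x - symOp r μ W₀ x :=
      symOp_sub r μ W W₀ x
    rw [e2]; ring
  have hsum : ∑ x, μ x * W x * (-(symOp r μ W x))
      = (∑ x, μ x * W₀ x * (-(symOp r μ W₀ x)))
        + (∑ x, μ x * (W x - W₀ x) * (-(symOp r μ (fun z => W z - W₀ z) x)))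
        - (∑ x, μ x * W₀ x * symOp r μ (fun z => W z - W₀ z) x)
        - (∑ x, μ x * (W x - W₀ x) * symOp r μ W₀ x) := by
    simp only [hpt]
    rw [← Finset.sum_add_distrib, ← Finset.sum_sub_distrib, ← Finset.sum_sub_distrib]
  have hsym2 : ∑ x, μ x * (W x - W₀ x) * symOp r μ W₀ x
      = ∑ x, μ x * W₀ x * symOp r μ (fun z => W z - W₀ z) x :=
    symOp_symm r μ hμ hstat (fun z => W z - W₀ z) W₀
  have hDU : ∑ x, μ x * (W x - W₀ x) * (-(symOp r μ (fun z => W z - W₀ z) x))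
      = (1/2) * ∑ x, ∑ y, μ x * r x y * ((W x - W₀ x) - (W y - W₀ y))^2 :=
    dirichlet_form r μ hμ hstat _
  have hnn : (0:ℝ) ≤ ∑ x, ∑ y, μ x * r x y * ((W x - W₀ x) - (W y - W₀ y))^2 :=
    dform_nonneg r μ hr hμ _
  constructor
  · linarith
  · intro heq
    -- equality forces U constant
    have hDS0 : ∑ x, ∑ y, μ x * r x y * ((W x - W₀ x) - (W y - W₀ y))^2 = 0 := by
      linarith
    have hUconst : ∀ x y, W x - W₀ x = W y - W₀ y :=
      const_of_dform_zero r μ hr hμ hirr (fun z => W z - W₀ z) hDS0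
    -- hence L* g = 0 everywhere
    have hSU0 : ∀ x, Ld (adjRates r μ) (fun z => f z - (V z + Vs z)/2) x = 0 := by
      intro x
      rw [← hSU x]
      unfold symOp
      rw [Ld_of_const r (fun z => W z - W₀ z) hUconst x,
        Ld_of_const (adjRates r μ) (fun z => W z - W₀ z) hUconst x]
      norm_num
    -- hence the Dirichlet form of g vanishes, so g is constant
    have hadjg : ∑ x, μ x * Ld r (fun z => f z - (V z + Vs z)/2) x * (f x - (V x + Vs x)/2)
        = ∑ x, μ x * (f x - (V x + Vs x)/2)
            * Ld (adjRates r μ) (fun z => f z - (V z + Vs z)/2) x :=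
      adj r μ hμ hstat _ _
    have h2 : ∑ x, μ x * (f x - (V x + Vs x)/2)
        * Ld (adjRates r μ) (fun z => f z - (V z + Vs z)/2) x = 0 :=
      Finset.sum_eq_zero fun x _ => by rw [hSU0 x]; ring
    have hgLg : ∑ x, μ x * (f x - (V x + Vs x)/2)
        * Ld r (fun z => f z - (V z + Vs z)/2) x = 0 := by
      have hcomm : ∑ x, μ x * (f x - (V x + Vs x)/2)
            * Ld r (fun z => f z - (V z + Vs z)/2) x
          = ∑ x, μ x * Ld r (fun z => f z - (V z + Vs z)/2) x * (f x - (V x + Vs x)/2) :=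
        Finset.sum_congr rfl fun x _ => by ring
      rw [hcomm, hadjg]; exact h2
    have hptg : ∀ x, μ x * (f x - (V x + Vs x)/2)
          * (-(symOp r μ (fun z => f z - (V z + Vs z)/2) x))
        = (-(1:ℝ)/2) * (μ x * (f x - (V x + Vs x)/2)
            * Ld r (fun z => f z - (V z + Vs z)/2) x) := by
      intro x
      unfold symOp
      rw [hSU0 x]
      ring
    have hDg : ∑ x, μ x * (f x - (V x + Vs x)/2)
        * (-(symOp r μ (fun z => f z - (V z + Vs z)/2) x)) = 0 := by
      simp only [hptg]
      rw [← Finset.mul_sum, hgLg]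
      ring
    have hDgf : ∑ x, μ x * (f x - (V x + Vs x)/2)
          * (-(symOp r μ (fun z => f z - (V z + Vs z)/2) x))
        = (1/2) * ∑ x, ∑ y, μ x * r x y
            * ((f x - (V x + Vs x)/2) - (f y - (V y + Vs y)/2))^2 :=
      dirichlet_form r μ hμ hstat _
    have hDSg0 : ∑ x, ∑ y, μ x * r x y
        * ((f x - (V x + Vs x)/2) - (f y - (V y + Vs y)/2))^2 = 0 := by
      rw [hDg] at hDgf; linarith
    have hgconst : ∀ x y, f x - (V x + Vs x)/2 = f y - (V y + Vs y)/2 :=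
      const_of_dform_zero r μ hr hμ hirr (fun z => f z - (V z + Vs z)/2) hDSg0
    funext z
    have h := hgconst z a
    rw [hga] at h
    show f z = (V z + Vs z) / 2
    linarith
end

section
/- Symmetry of capacity for finite non-reversible chains: for any two disjoint nonempty subsets A, B of a finite irreducible Markov chain state space, Σ_{x∈A} μ(x)λ(x) P_x[T_A⁺ > T_B⁺] = Σ_{y∈B} μ(y)λ(y) P_y[T_B⁺ > T_A⁺], i.e. Cap(A,B) = Cap(B,A). -/
open Finset

section Aux
variable {E : Type*} [Fintype E]

lemma swap_sum (r : E → E → ℝ) (μ : E → ℝ)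
    (hstat : ∀ y, ∑ x, μ x * r x y = μ y * ∑ x, r y x) (g : E → ℝ) :
    ∑ x, ∑ y, μ x * r x y * g y = ∑ x, ∑ y, μ x * r x y * g x := by
  rw [Finset.sum_comm]
  refine Finset.sum_congr rfl fun y _ => ?_
  rw [← Finset.sum_mul, hstat y, Finset.mul_sum, Finset.sum_mul]

lemma stat_sum (r : E → E → ℝ) (μ : E → ℝ)
    (hstat : ∀ y, ∑ x, μ x * r x y = μ y * ∑ x, r y x) (f : E → ℝ) :
    ∑ x, μ x * Ld r f x = 0 := by
  have h1 : ∑ x, μ x * Ld r f x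
      = (∑ x, ∑ y, μ x * r x y * f y) - ∑ x, ∑ y, μ x * r x y * f x := by
    rw [← Finset.sum_sub_distrib]
    refine Finset.sum_congr rfl fun x _ => ?_
    unfold Ld
    rw [Finset.mul_sum, ← Finset.sum_sub_distrib]
    exact Finset.sum_congr rfl fun y _ => by ring
  rw [h1, swap_sum r μ hstat f, sub_self]

lemma dirichlet (r : E → E → ℝ) (μ : E → ℝ)
    (hstat : ∀ y, ∑ x, μ x * r x y = μ y * ∑ x, r y x) (f : E → ℝ) :
    ∑ x, μ x * f x * (-(Ld r f x))
      = (1/2) * ∑ x, ∑ y, μ x * r x y * (f x - f y)^2 := by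
  have hL : ∑ x, μ x * f x * (-(Ld r f x))
      = (∑ x, ∑ y, μ x * r x y * (f x * f x))
        - ∑ x, ∑ y, μ x * r x y * (f x * f y) := by
    rw [← Finset.sum_sub_distrib]
    refine Finset.sum_congr rfl fun x _ => ?_
    unfold Ld
    rw [mul_neg, Finset.mul_sum, ← Finset.sum_neg_distrib, ← Finset.sum_sub_distrib]
    exact Finset.sum_congr rfl fun y _ => by ring
  have hR : ∑ x, ∑ y, μ x * r x y * (f x - f y)^2
      = ((∑ x, ∑ y, μ x * r x y * (f x * f x))
        - 2 * ∑ x, ∑ y, μ x * r x y * (f x * f y))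
        + ∑ x, ∑ y, μ x * r x y * (f y * f y) := by
    rw [Finset.mul_sum, ← Finset.sum_sub_distrib, ← Finset.sum_add_distrib]
    refine Finset.sum_congr rfl fun x _ => ?_
    rw [Finset.mul_sum, ← Finset.sum_sub_distrib, ← Finset.sum_add_distrib]
    exact Finset.sum_congr rfl fun y _ => by ring
  have h3 : ∑ x, ∑ y, μ x * r x y * (f y * f y)
      = ∑ x, ∑ y, μ x * r x y * (f x * f x) :=
    swap_sum r μ hstat (fun z => f z * f z)
  rw [hL, hR, h3]; ring

end Aux

/-- **Symmetry of the capacity for finite non-reversible chains: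
`Cap(A,B) = Cap(B,A)`.**
Expressed through the equilibrium potentials: if `V_{A,B}` is `L`-harmonic
off `A ∪ B` with `V_{A,B} = 1` on `A`, `0` on `B`, and `V_{B,A}` is
`L`-harmonic off `A ∪ B` with `V_{B,A} = 1` on `B`, `0` on `A`, then
`⟨V_{A,B}, (-L) V_{A,B}⟩_μ = ⟨V_{B,A}, (-L) V_{B,A}⟩_μ`. -/
theorem capacity_symmetric {E : Type*} [Fintype E] [DecidableEq E]
    (r : E → E → ℝ) (μ : E → ℝ) (A B : Finset E)
    (hA : A.Nonempty) (hB : B.Nonempty) (hAB : Disjoint A B)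
    (hr : ∀ x y, 0 ≤ r x y) (hrdiag : ∀ x, r x x = 0)
    (hμ : ∀ x, 0 < μ x)
    (hstat : ∀ y, ∑ x, μ x * r x y = μ y * ∑ x, r y x)
    (hirr : ∀ h : E → ℝ,
      (∀ x y, 0 < μ x * r x y + μ y * r y x → h x = h y) → ∀ x y, h x = h y)
    (VAB VBA : E → ℝ)
    (hVAB1 : ∀ x ∈ A, VAB x = 1) (hVAB0 : ∀ x ∈ B, VAB x = 0)
    (hVABharm : ∀ x, x ∉ A → x ∉ B → Ld r VAB x = 0)
    (hVBA1 : ∀ x ∈ B, VBA x = 1) (hVBA0 : ∀ x ∈ A, VBA x = 0)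
    (hVBAharm : ∀ x, x ∉ A → x ∉ B → Ld r VBA x = 0) :
    ∑ x, μ x * VAB x * (-(Ld r VAB x)) =
      ∑ x, μ x * VBA x * (-(Ld r VBA x)) := by
  set g : E → ℝ := fun x => VAB x + VBA x - 1 with hg
  -- g vanishes on A and B
  have hgA : ∀ x ∈ A, g x = 0 := fun x hx => by
    simp [hg, hVAB1 x hx, hVBA0 x hx]
  have hgB : ∀ x ∈ B, g x = 0 := fun x hx => by
    simp [hg, hVAB0 x hx, hVBA1 x hx]
  -- L g = L VAB + L VBA
  have hLg : ∀ x, Ld r g x = Ld r VAB x + Ld r VBA x := by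
    intro x
    unfold Ld
    rw [← Finset.sum_add_distrib]
    exact Finset.sum_congr rfl fun y _ => by simp only [hg]; ring
  -- the Dirichlet energy of g vanishes
  have hE : ∑ x, μ x * g x * (-(Ld r g x)) = 0 := by
    apply Finset.sum_eq_zero
    intro x _
    by_cases hxA : x ∈ A
    · rw [hgA x hxA]; ring
    by_cases hxB : x ∈ B
    · rw [hgB x hxB]; ring
    · rw [hLg x, hVABharm x hxA hxB, hVBAharm x hxA hxB]; ring
  -- hence each term of the symmetrized form vanishes
  have hsum0 : ∑ x, ∑ y, μ x * r x y * (g x - g y)^2 = 0 := by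
    have := dirichlet r μ hstat g
    rw [hE] at this
    linarith
  have hterm : ∀ x y, μ x * r x y * (g x - g y)^2 = 0 := by
    have hnn : ∀ x ∈ (Finset.univ : Finset E),
        0 ≤ ∑ y, μ x * r x y * (g x - g y)^2 := fun x _ =>
      Finset.sum_nonneg fun y _ =>
        mul_nonneg (mul_nonneg (le_of_lt (hμ x)) (hr x y)) (sq_nonneg _)
    intro x y
    have hx := (Finset.sum_eq_zero_iff_of_nonneg hnn).mp hsum0 x (Finset.mem_univ x)
    have hnn2 : ∀ y ∈ (Finset.univ : Finset E),
        0 ≤ μ x * r x y * (g x - g y)^2 := fun y _ =>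
      mul_nonneg (mul_nonneg (le_of_lt (hμ x)) (hr x y)) (sq_nonneg _)
    exact (Finset.sum_eq_zero_iff_of_nonneg hnn2).mp hx y (Finset.mem_univ y)
  -- g is constant along edges, hence constant by irreducibility
  have hedge : ∀ x y, 0 < μ x * r x y + μ y * r y x → g x = g y := by
    intro x y hpos
    have h1 : 0 ≤ μ x * r x y := mul_nonneg (le_of_lt (hμ x)) (hr x y)
    have h2 : 0 ≤ μ y * r y x := mul_nonneg (le_of_lt (hμ y)) (hr y x)
    rcases lt_or_eq_of_le h1 with h1' | h1'
    · have := hterm x y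
      have hsq : (g x - g y)^2 = 0 := by
        by_contra hne
        have : 0 < μ x * r x y * (g x - g y)^2 :=
          mul_pos h1' (lt_of_le_of_ne (sq_nonneg _) (Ne.symm hne))
        linarith [hterm x y]
      have := pow_eq_zero_iff (n := 2) (by norm_num) |>.mp hsq
      linarith [sub_eq_zero.mp this]
    · rcases lt_or_eq_of_le h2 with h2' | h2'
      · have hsq : (g y - g x)^2 = 0 := by
          by_contra hne
          have : 0 < μ y * r y x * (g y - g x)^2 :=
            mul_pos h2' (lt_of_le_of_ne (sq_nonneg _) (Ne.symm hne))
          linarith [hterm y x]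
        have := pow_eq_zero_iff (n := 2) (by norm_num) |>.mp hsq
        linarith [sub_eq_zero.mp this]
      · exfalso; rw [← h1', ← h2'] at hpos; linarith
  have hgconst : ∀ x y, g x = g y := hirr g hedge
  obtain ⟨a, ha⟩ := hA
  have hgzero : ∀ x, g x = 0 := fun x => by rw [hgconst x a, hgA a ha]
  -- hence VBA = 1 - VAB
  have hVBAeq : ∀ x, VBA x = 1 - VAB x := by
    intro x
    have := hgzero x
    simp only [hg] at this
    linarith
  have hLVBA : ∀ x, Ld r VBA x = -(Ld r VAB x) := by
    intro x
    unfold Ld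
    rw [← Finset.sum_neg_distrib]
    refine Finset.sum_congr rfl fun y _ => ?_
    rw [hVBAeq y, hVBAeq x]; ring
  -- conclude
  have hRHS : ∑ x, μ x * VBA x * (-(Ld r VBA x))
      = (∑ x, μ x * Ld r VAB x) - ∑ x, μ x * VAB x * Ld r VAB x := by
    rw [← Finset.sum_sub_distrib]
    refine Finset.sum_congr rfl fun x _ => ?_
    rw [hVBAeq x, hLVBA x]; ring
  rw [hRHS, stat_sum r μ hstat VAB]
  rw [show (0 : ℝ) - ∑ x, μ x * VAB x * Ld r VAB x
      = ∑ x, -(μ x * VAB x * Ld r VAB x) by rw [Finset.sum_neg_distrib]; ring]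
  exact Finset.sum_congr rfl fun x _ => by ring
end
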